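/- A trigonometric polynomial f(z) = ∑_{n=-N}^{N} a_n z^n on the circle group 𝕋 is positive definite if and only if all coefficients a_n are nonnegative real numbers. -/
import Mathlib


open scoped ComplexOrder

open Complex Finset in
private lemma trig_key_sum (N : ℕ) (a : ℤ → ℂ) (m : ℕ) (z : Fin m → Circle) (c : Fin m → ℂ) :
    ∑ i, ∑ j, c i * (starRingEnd ℂ) (c j) *
        (∑ n ∈ Finset.Icc (-(N : ℤ)) (N : ℤ), a n * ((z i * (z j)⁻¹ : Circle) : ℂ) ^ n)
      = ∑ n ∈ Finset.Icc (-(N : ℤ)) (N : ℤ),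
          a n * (∑ i, c i * ((z i : ℂ)) ^ n) * (∑ j, (starRingEnd ℂ) (c j) * ((z j : ℂ)) ^ (-n)) := by
  have hw : ∀ (i j : Fin m) (n : ℤ),
      ((z i * (z j)⁻¹ : Circle) : ℂ) ^ n = (z i : ℂ) ^ n * (z j : ℂ) ^ (-n) := by
    intro i j n
    push_cast
    rw [mul_zpow, inv_zpow, ← zpow_neg]
  simp only [hw, Finset.mul_sum, Finset.sum_mul]
  calc
    ∑ i, ∑ j, ∑ n ∈ Finset.Icc (-(N : ℤ)) (N : ℤ),
        c i * (starRingEnd ℂ) (c j) * (a n * ((z i : ℂ) ^ n * (z j : ℂ) ^ (-n)))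
      = ∑ i, ∑ n ∈ Finset.Icc (-(N : ℤ)) (N : ℤ), ∑ j,
          c i * (starRingEnd ℂ) (c j) * (a n * ((z i : ℂ) ^ n * (z j : ℂ) ^ (-n))) :=
        Finset.sum_congr rfl fun i _ => Finset.sum_comm
    _ = ∑ n ∈ Finset.Icc (-(N : ℤ)) (N : ℤ), ∑ i, ∑ j,
          c i * (starRingEnd ℂ) (c j) * (a n * ((z i : ℂ) ^ n * (z j : ℂ) ^ (-n))) :=
        Finset.sum_comm
    _ = _ := by
        refine Finset.sum_congr rfl fun n _ => ?_
        rw [Finset.sum_comm]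
        exact Finset.sum_congr rfl fun i _ => Finset.sum_congr rfl fun j _ => by ring

/-- Herglotz–Bochner for trigonometric polynomials: a trigonometric polynomial
`f(z) = ∑_{n=-N}^{N} a_n z^n` on the circle group is positive definite if and
only if all its coefficients `a_n` are nonnegative real numbers. -/
theorem trig_poly_posdef_iff_coeff_nonneg
    (N : ℕ) (a : ℤ → ℂ) (f : Circle → ℂ)
    (hf : f = fun z : Circle => ∑ n ∈ Finset.Icc (-(N : ℤ)) (N : ℤ),
      a n * (z : ℂ) ^ n) :
    (∀ (m : ℕ) (z : Fin m → Circle) (c : Fin m → ℂ),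
        0 ≤ ∑ i, ∑ j, c i * (starRingEnd ℂ) (c j) * f (z i * (z j)⁻¹))
      ↔ ∀ n ∈ Finset.Icc (-(N : ℤ)) (N : ℤ), 0 ≤ a n := by
  subst hf
  constructor
  · -- positive definite → coefficients nonnegative
    intro h n hn
    simp only [Finset.mem_Icc] at hn
    set m : ℕ := 2 * N + 1 with hm
    have hm0 : (m : ℤ) ≠ 0 := by positivity
    set ζc : Circle := Circle.exp (2 * Real.pi / m) with hζc
    have hζ : (ζc : ℂ) = Complex.exp (2 * Real.pi * Complex.I / m) := by
      rw [hζc, Circle.coe_exp]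
      congr 1
      push_cast
      ring
    have hprim : IsPrimitiveRoot (ζc : ℂ) m := by
      rw [hζ]; exact Complex.isPrimitiveRoot_exp m (by omega)
    have hζne : (ζc : ℂ) ≠ 0 := Circle.coe_ne_zero ζc
    -- the root-of-unity sum
    have hS : ∀ d : ℤ, ∑ i : Fin m, (ζc : ℂ) ^ ((i : ℤ) * d)
        = if (m : ℤ) ∣ d then (m : ℂ) else 0 := by
      intro d
      have hrw : ∀ i : Fin m, (ζc : ℂ) ^ ((i : ℤ) * d) = ((ζc : ℂ) ^ d) ^ (i : ℕ) := by
        intro i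
        rw [mul_comm, zpow_mul, zpow_natCast]
      simp only [hrw]
      rw [Fin.sum_univ_eq_sum_range (fun i => ((ζc : ℂ) ^ d) ^ i) m]
      by_cases hd : (m : ℤ) ∣ d
      · rw [if_pos hd, (hprim.zpow_eq_one_iff_dvd d).2 hd]
        simp
      · rw [if_neg hd]
        have hx1 : (ζc : ℂ) ^ d ≠ 1 := fun hx => hd ((hprim.zpow_eq_one_iff_dvd d).1 hx)
        have hxm : ((ζc : ℂ) ^ d) ^ m = 1 := by
          rw [← zpow_natCast _ m, ← zpow_mul, mul_comm, zpow_mul, zpow_natCast,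
            hprim.pow_eq_one, one_zpow]
        rw [geom_sum_eq hx1, hxm]
        simp
    set z : Fin m → Circle := fun i => ζc ^ (i : ℕ) with hz
    set c : Fin m → ℂ := fun i => ((z i : ℂ)) ^ (-n) with hc
    have h0 := h m z c
    rw [trig_key_sum] at h0
    have hconj : ∀ j : Fin m, (starRingEnd ℂ) (c j) = ((z j : ℂ)) ^ n := by
      intro j
      rw [hc]
      rw [map_zpow₀, ← Circle.coe_inv_eq_conj, Circle.coe_inv, inv_zpow, ← zpow_neg, neg_neg]
    have hcoe : ∀ i : Fin m, (z i : ℂ) = (ζc : ℂ) ^ (i : ℕ) := by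
      intro i; rw [hz]; norm_cast
    have hA : ∀ k : ℤ, (∑ i, c i * ((z i : ℂ)) ^ k)
        = if (m : ℤ) ∣ (k - n) then (m : ℂ) else 0 := by
      intro k
      rw [← hS (k - n)]
      refine Finset.sum_congr rfl fun i _ => ?_
      simp only [hc, hcoe]
      rw [← zpow_natCast (ζc : ℂ) (i : ℕ), ← zpow_mul, ← zpow_mul, ← zpow_add₀ hζne]
      congr 1
      ring
    have hB : ∀ k : ℤ, (∑ j, (starRingEnd ℂ) (c j) * ((z j : ℂ)) ^ (-k))
        = if (m : ℤ) ∣ (n - k) then (m : ℂ) else 0 := by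
      intro k
      rw [← hS (n - k)]
      refine Finset.sum_congr rfl fun j _ => ?_
      simp only [hconj, hcoe]
      rw [← zpow_natCast (ζc : ℂ) (j : ℕ), ← zpow_mul, ← zpow_mul, ← zpow_add₀ hζne]
      congr 1
      ring
    simp only [hA, hB] at h0
    have hsingle : ∑ k ∈ Finset.Icc (-(N : ℤ)) (N : ℤ),
        a k * (if (m : ℤ) ∣ (k - n) then (m : ℂ) else 0)
          * (if (m : ℤ) ∣ (n - k) then (m : ℂ) else 0)
        = a n * m * m := by
      rw [Finset.sum_eq_single n]
      · simp
      · intro k hk hkn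
        simp only [Finset.mem_Icc] at hk
        have hnd : ¬ (m : ℤ) ∣ (k - n) := by
          intro hdvd
          have habs : |k - n| < (m : ℤ) := by
            rw [abs_lt]; omega
          exact hkn (by have := Int.eq_zero_of_abs_lt_dvd hdvd habs; omega)
        rw [if_neg hnd]
        ring
      · intro hn'
        exact absurd (Finset.mem_Icc.2 ⟨by omega, by omega⟩) hn'
    rw [hsingle] at h0
    have hmpos : (0 : ℝ) < m := by positivity
    rw [Complex.le_def] at h0 ⊢
    simp only [Complex.mul_re, Complex.mul_im, Complex.natCast_re, Complex.natCast_im,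
      Complex.zero_re, Complex.zero_im, mul_zero, zero_mul, sub_zero, add_zero,
      zero_add, zero_sub, neg_eq_zero] at h0 ⊢
    obtain ⟨h1, h2⟩ := h0
    constructor
    · nlinarith [mul_pos hmpos hmpos]
    · have : (a n).im * (m : ℝ) * (m : ℝ) = 0 := by linarith
      have := mul_eq_zero.1 this
      rcases this with h' | h'
      · rcases mul_eq_zero.1 h' with h'' | h''
        · exact h''.symm
        · exact absurd h'' (ne_of_gt hmpos)
      · exact absurd h' (ne_of_gt hmpos)
  · -- coefficients nonnegative → positive definite
    intro ha m z c
    rw [trig_key_sum]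
    refine Finset.sum_nonneg fun n hn => ?_
    have hconj : (∑ j, (starRingEnd ℂ) (c j) * ((z j : ℂ)) ^ (-n))
        = (starRingEnd ℂ) (∑ i, c i * ((z i : ℂ)) ^ n) := by
      rw [map_sum]
      refine Finset.sum_congr rfl fun j _ => ?_
      rw [map_mul, map_zpow₀, ← Circle.coe_inv_eq_conj, Circle.coe_inv, inv_zpow, ← zpow_neg]
    rw [hconj, mul_assoc, Complex.mul_conj]
    exact mul_nonneg (ha n hn) (by rw [Complex.zero_le_real]; exact Complex.normSq_nonneg _)
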